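/- arXiv:math/9706214 — 2 statements merged into one kernel-verified Lean document; each statement's English description precedes it below -/
import Mathlib

section
/- Let X be a real Banach space whose norm is locally uniformly convex and uniformly smooth, let p > 1, and let f : X → ℝ ∪ {+∞} be proper, lower semicontinuous and bounded below. Then Δ_n^p f(x) → f(x) as n → ∞ for every x ∈ X (convergence in ℝ ∪ {+∞}); and if moreover f : X → ℝ is real-valued and continuous, then Δ_n^p f → f uniformly on every compact subset of X. -/
open scoped BigOperators

/-- The convex envelope of a function `h : X → ℝ`, given by the infimum over all
finite convex combinations. -/
noncomputable def convEnv {X : Type*} [NormedAddCommGroup X] [NormedSpace ℝ X]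
    (h : X → ℝ) (x : X) : ℝ :=
  sInf { r : ℝ | ∃ (m : ℕ) (l : Fin m → ℝ) (z : Fin m → X),
    (∀ i, 0 < l i) ∧ ∑ i, l i = 1 ∧ ∑ i, l i • z i = x ∧ ∑ i, l i * h (z i) = r }

/-- The kernel `K_p(x,y) = 2^(p-1)‖x‖^p + 2^(p-1)‖y‖^p - ‖x+y‖^p`. -/
noncomputable def Kp {X : Type*} [NormedAddCommGroup X] (p : ℝ) (x y : X) : ℝ :=
  2 ^ (p - 1) * ‖x‖ ^ p + 2 ^ (p - 1) * ‖y‖ ^ p - ‖x + y‖ ^ p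

/-- `g_n^p(x) = inf_y (f(y) + n K_p(x,y)) + 2^(p-1) n ‖x‖^p`. -/
noncomputable def gnp {X : Type*} [NormedAddCommGroup X] (p : ℝ) (f : X → EReal)
    (n : ℕ) (x : X) : ℝ :=
  (⨅ y, f y + (((n : ℝ) * Kp p x y : ℝ) : EReal)).toReal + 2 ^ (p - 1) * (n : ℝ) * ‖x‖ ^ p

/-- `Δ_n^p f = co(g_n^p) - 2^(p-1) n ‖·‖^p`. -/
noncomputable def Delta {X : Type*} [NormedAddCommGroup X] [NormedSpace ℝ X]
    (p : ℝ) (f : X → EReal) (n : ℕ) (x : X) : ℝ :=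
  convEnv (gnp p f n) x - 2 ^ (p - 1) * (n : ℝ) * ‖x‖ ^ p

/-!
By Jensen `Kp p x y ≥ 0`, with equality on the diagonal, and local uniform convexity upgrades
this to `Kp p w z + Kp p z y ≥ κ > 0` whenever `y` is `r`-far from `w`, uniformly for `w` near a
given point. Let `B z = ‖z‖ ^ p - T z ≥ 0` be the gap between `‖·‖ ^ p` and its tangent `T` at `w`,
built from a norming functional; then `Kp p w z ≤ 2 ^ (p - 1) * B z`. So if `f ≥ M` on the
`r`-ball around `w` and `n κ ≥ M - inf f`, every `f y + n Kp p z y` is at least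
`M - 2 ^ (p - 1) n B z`, i.e. `gnp p f n ≥ M + 2 ^ (p - 1) n T`. This affine minorant bounds the
convex envelope from below and gives `Δ_n^p f w ≥ M`, while testing `y = w` gives
`Δ_n^p f w ≤ f w`. Lower semicontinuity of `f` then yields pointwise convergence, and continuity
together with the uniformity in `w` yields locally uniform, hence compactly uniform, convergence.
-/

open Filter Topology Metric Set
open scoped NNReal

section Scalar

variable {p : ℝ}

lemma two_mul_two_rpow_sub_one (p : ℝ) : 2 * (2 : ℝ) ^ (p - 1) = 2 ^ p := by
  rw [Real.rpow_sub_one two_ne_zero]; ring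

lemma rpow_add_le_two_rpow_mul (hp : 1 ≤ p) {s t : ℝ} (hs : 0 ≤ s) (ht : 0 ≤ t) :
    (s + t) ^ p ≤ 2 ^ (p - 1) * (s ^ p + t ^ p) := by
  lift s to ℝ≥0 using hs
  lift t to ℝ≥0 using ht
  exact_mod_cast NNReal.rpow_add_le_mul_rpow_add_rpow s t hp

lemma rpow_add_lt_two_rpow_mul (hp : 1 < p) {s t : ℝ} (hs : 0 ≤ s) (ht : 0 ≤ t) (hst : s ≠ t) :
    (s + t) ^ p < 2 ^ (p - 1) * (s ^ p + t ^ p) := by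
  have h := (strictConvexOn_rpow hp).2 hs ht hst (by norm_num : (0 : ℝ) < 1 / 2)
    (by norm_num : (0 : ℝ) < 1 / 2) (by norm_num)
  simp only [smul_eq_mul] at h
  calc (s + t) ^ p = 2 ^ p * (1 / 2 * s + 1 / 2 * t) ^ p := by
        rw [← Real.mul_rpow (by norm_num) (by positivity)]; ring_nf
    _ < 2 ^ p * (1 / 2 * s ^ p + 1 / 2 * t ^ p) := by gcongr
    _ = 2 ^ (p - 1) * (s ^ p + t ^ p) := by rw [← two_mul_two_rpow_sub_one]; ring

lemma rpow_add_mul_sub_le_rpow (hp : 1 < p) {a t : ℝ} (ha : 0 ≤ a) (ht : 0 ≤ t) :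
    a ^ p + p * a ^ (p - 1) * (t - a) ≤ t ^ p := by
  rcases ha.eq_or_lt with rfl | ha
  · simp [Real.zero_rpow (by linarith : p ≠ 0), Real.zero_rpow (by linarith : p - 1 ≠ 0),
      Real.rpow_nonneg ht]
  have hb := one_add_mul_self_le_rpow_one_add (by linarith [div_nonneg ht ha.le] :
    -1 ≤ t / a - 1) hp.le
  rw [add_sub_cancel, Real.div_rpow ht ha.le, le_div_iff₀ (by positivity)] at hb
  calc a ^ p + p * a ^ (p - 1) * (t - a) = (1 + p * (t / a - 1)) * a ^ p := by
        rw [Real.rpow_sub_one ha.ne']; field_simp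
    _ ≤ t ^ p := hb

lemma rpow_sub_rpow_le (hp : 1 < p) {s t M : ℝ} (hs : 0 ≤ s) (hst : s ≤ t) (htM : t ≤ M) :
    t ^ p - s ^ p ≤ p * M ^ (p - 1) * (t - s) := by
  have ht : 0 ≤ t := hs.trans hst
  have htM' : t ^ (p - 1) ≤ M ^ (p - 1) := by gcongr
  have := rpow_add_mul_sub_le_rpow hp ht hs
  nlinarith [mul_le_mul_of_nonneg_left htM' (by nlinarith : 0 ≤ p * (t - s))]

lemma abs_rpow_sub_rpow_le (hp : 1 < p) {s t M : ℝ} (hs : 0 ≤ s) (ht : 0 ≤ t) (hsM : s ≤ M)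
    (htM : t ≤ M) : |t ^ p - s ^ p| ≤ p * M ^ (p - 1) * |t - s| := by
  wlog hst : s ≤ t generalizing s t
  · rw [abs_sub_comm, abs_sub_comm t]; exact this ht hs htM hsM (le_of_not_ge hst)
  rw [abs_of_nonneg (sub_nonneg.2 hst), abs_of_nonneg (sub_nonneg.2 (by gcongr))]
  exact rpow_sub_rpow_le hp hs hst htM

lemma tendsto_two_rpow_mul_rpow_sub_add_rpow_atTop (hp : 1 < p) (a : ℝ) :
    Tendsto (fun b : ℝ => 2 ^ (p - 1) * b ^ p - (a + b) ^ p) atTop atTop := by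
  have hc : 0 < (2 : ℝ) ^ (p - 1) - 1 := by
    linarith [Real.one_lt_rpow (by norm_num : (1 : ℝ) < 2) (by linarith : 0 < p - 1)]
  have hratio : Tendsto (fun b : ℝ => 2 ^ (p - 1) - (1 + a / b) ^ p) atTop
      (𝓝 (2 ^ (p - 1) - 1)) := by
    have h : Tendsto (fun b : ℝ => 1 + a / b) atTop (𝓝 1) := by
      simpa using tendsto_const_nhds.add ((tendsto_const_nhds (x := a)).div_atTop tendsto_id)
    simpa using tendsto_const_nhds.sub (h.rpow_const (p := p) (Or.inl one_ne_zero))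
  refine ((tendsto_rpow_atTop (y := p) (by linarith)).atTop_mul_pos hc hratio).congr' ?_
  filter_upwards [eventually_gt_atTop |a|] with b hb
  have hb0 : 0 < b := (abs_nonneg a).trans_lt hb
  have hab : a + b = b * (1 + a / b) := by field_simp; ring
  have h1 : 0 ≤ 1 + a / b := by
    rw [← div_self hb0.ne', ← add_div]; exact div_nonneg (by linarith [neg_abs_le a]) hb0.le
  simp only [hab, Real.mul_rpow hb0.le h1]
  ring

lemma exists_pos_le_two_rpow_mul_sub_rpow_add (hp : 1 < p) {a s : ℝ} (ha : 0 ≤ a)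
    (hs : 0 < s) : ∃ ι > 0, ∀ b, 0 ≤ b → s ≤ |b - a| →
      ι ≤ 2 ^ (p - 1) * (a ^ p + b ^ p) - (a + b) ^ p := by
  obtain ⟨R, hR⟩ := eventually_atTop.1
    ((tendsto_two_rpow_mul_rpow_sub_add_rpow_atTop hp a).eventually_ge_atTop 1)
  have hcont : Continuous fun b : ℝ => 2 ^ (p - 1) * (a ^ p + b ^ p) - (a + b) ^ p := by
    have := Real.continuous_rpow_const (q := p) (by linarith)
    fun_prop
  have hcompact : IsCompact (Icc 0 R ∩ {b | s ≤ |b - a|}) :=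
    isCompact_Icc.inter_right (isClosed_le continuous_const (by fun_prop))
  obtain ⟨ι, hι, hιle⟩ := hcompact.exists_forall_le' hcont.continuousOn (a := 0)
    fun b ⟨⟨hb, _⟩, hba⟩ => sub_pos.2 <| rpow_add_lt_two_rpow_mul hp ha hb fun h => by
      simp [h] at hba; linarith
  refine ⟨min 1 ι, lt_min one_pos hι, fun b hb hba => ?_⟩
  rcases le_total R b with hRb | hbR
  · have hap : 0 ≤ 2 ^ (p - 1) * a ^ p := by positivity
    linarith [min_le_left 1 ι, hR b hRb]
  · exact (min_le_right _ _).trans (hιle b ⟨⟨hb, hbR⟩, hba⟩)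

end Scalar

section Kernel

variable {X : Type*} [NormedAddCommGroup X] {p : ℝ}

lemma Kp_self [NormedSpace ℝ X] (p : ℝ) (x : X) : Kp p x x = 0 := by
  have hxx : ‖x + x‖ = 2 * ‖x‖ := by rw [← two_smul ℝ x, norm_smul]; norm_num
  rw [Kp, hxx, Real.mul_rpow zero_le_two (norm_nonneg x)]
  linear_combination ‖x‖ ^ p * two_mul_two_rpow_sub_one p

lemma sub_rpow_norm_add_norm_le_Kp (hp : 0 ≤ p) (x y : X) :
    2 ^ (p - 1) * ‖x‖ ^ p + 2 ^ (p - 1) * ‖y‖ ^ p - (‖x‖ + ‖y‖) ^ p ≤ Kp p x y := by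
  have : ‖x + y‖ ^ p ≤ (‖x‖ + ‖y‖) ^ p := by gcongr; exact norm_add_le x y
  unfold Kp; linarith

lemma Kp_nonneg (hp : 1 ≤ p) (x y : X) : 0 ≤ Kp p x y := by
  linarith [sub_rpow_norm_add_norm_le_Kp (p := p) (by linarith) x y,
    rpow_add_le_two_rpow_mul hp (norm_nonneg x) (norm_nonneg y)]

lemma exists_one_le_Kp (hp : 1 < p) (R₀ : ℝ) :
    ∃ R, ∀ x y : X, ‖x‖ ≤ R₀ → R ≤ ‖y‖ → 1 ≤ Kp p x y := by
  obtain ⟨R, hR⟩ := eventually_atTop.1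
    ((tendsto_two_rpow_mul_rpow_sub_add_rpow_atTop hp R₀).eventually_ge_atTop 1)
  refine ⟨R, fun x y hx hy => ?_⟩
  have hsum : (‖x‖ + ‖y‖) ^ p ≤ (R₀ + ‖y‖) ^ p := by gcongr
  have hx0 : 0 ≤ 2 ^ (p - 1) * ‖x‖ ^ p := by positivity
  linarith [hR _ hy, sub_rpow_norm_add_norm_le_Kp (p := p) (by linarith) x y]

lemma abs_rpow_norm_sub_rpow_norm_le (hp : 1 < p) {u v : X} {M : ℝ} (hu : ‖u‖ ≤ M)
    (hv : ‖v‖ ≤ M) : |‖u‖ ^ p - ‖v‖ ^ p| ≤ p * M ^ (p - 1) * ‖u - v‖ := by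
  have hM : 0 ≤ p * M ^ (p - 1) :=
    mul_nonneg (by linarith) (Real.rpow_nonneg ((norm_nonneg u).trans hu) _)
  calc |‖u‖ ^ p - ‖v‖ ^ p| ≤ p * M ^ (p - 1) * |‖u‖ - ‖v‖| :=
        abs_rpow_sub_rpow_le hp (norm_nonneg v) (norm_nonneg u) hv hu
    _ ≤ p * M ^ (p - 1) * ‖u - v‖ := by gcongr; exact abs_norm_sub_norm_le u v

lemma abs_Kp_sub_Kp_le (hp : 1 < p) {x x' y : X} {R : ℝ} (hx : ‖x‖ ≤ R) (hx' : ‖x'‖ ≤ R)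
    (hy : ‖y‖ ≤ R) :
    |Kp p x' y - Kp p x y| ≤ (2 ^ (p - 1) + 1) * (p * (2 * R) ^ (p - 1)) * ‖x' - x‖ := by
  have hR : 0 ≤ R := (norm_nonneg x).trans hx
  have h₁ : |‖x'‖ ^ p - ‖x‖ ^ p| ≤ p * (2 * R) ^ (p - 1) * ‖x' - x‖ :=
    abs_rpow_norm_sub_rpow_norm_le hp (by linarith) (by linarith)
  have h₂ : |‖x' + y‖ ^ p - ‖x + y‖ ^ p| ≤ p * (2 * R) ^ (p - 1) * ‖x' - x‖ := by
    simpa using abs_rpow_norm_sub_rpow_norm_le hp (u := x' + y) (v := x + y)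
      ((norm_add_le _ _).trans (by linarith)) ((norm_add_le _ _).trans (by linarith))
  have hc : (0 : ℝ) < 2 ^ (p - 1) := by positivity
  calc |Kp p x' y - Kp p x y|
      = |2 ^ (p - 1) * (‖x'‖ ^ p - ‖x‖ ^ p) - (‖x' + y‖ ^ p - ‖x + y‖ ^ p)| := by
        unfold Kp; ring_nf
    _ ≤ 2 ^ (p - 1) * |‖x'‖ ^ p - ‖x‖ ^ p| + |‖x' + y‖ ^ p - ‖x + y‖ ^ p| := by
        rw [← abs_of_pos hc, ← abs_mul, abs_of_pos hc]; exact abs_sub _ _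
    _ ≤ _ := by nlinarith

end Kernel

def IsLocallyUniformlyConvex (X : Type*) [NormedAddCommGroup X] : Prop :=
  ∀ x : X, ‖x‖ = 1 → ∀ ε : ℝ, 0 < ε → ∃ δ : ℝ, 0 < δ ∧
    ∀ y : X, ‖y‖ = 1 → ε ≤ ‖x - y‖ → ‖x + y‖ / 2 ≤ 1 - δ

section LocallyUniformlyConvex

variable {X : Type*} [NormedAddCommGroup X] [NormedSpace ℝ X] {p : ℝ}

lemma norm_inv_norm_smul {x : X} (hx : x ≠ 0) : ‖‖x‖⁻¹ • x‖ = 1 := by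
  simpa using norm_smul_inv_norm (𝕜 := ℝ) hx

theorem IsLocallyUniformlyConvex.exists_norm_sub_lt (hX : IsLocallyUniformlyConvex X) (x : X)
    {ε : ℝ} (hε : 0 < ε) : ∃ η > 0, ∀ y : X, |‖y‖ - ‖x‖| < η →
      ‖x‖ + ‖y‖ - η < ‖x + y‖ → ‖x - y‖ < ε := by
  rcases eq_or_ne x 0 with rfl | hx0
  · exact ⟨ε, hε, fun y hy _ => by simpa using hy⟩
  have ha : 0 < ‖x‖ := norm_pos_iff.2 hx0
  obtain ⟨δ, hδ, hLUR⟩ := hX _ (norm_inv_norm_smul hx0) (ε / (2 * ‖x‖)) (by positivity)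
  set η := min (min ‖x‖ (‖x‖ * δ / 2)) (ε / 2)
  have hη₀ : η ≤ ‖x‖ := (min_le_left _ _).trans (min_le_left _ _)
  have hη₁ : η ≤ ‖x‖ * δ / 2 := (min_le_left _ _).trans (min_le_right _ _)
  have hη₂ : η ≤ ε / 2 := min_le_right _ _
  refine ⟨η, by positivity, fun y hya hxy => ?_⟩
  have hy0 : y ≠ 0 := by
    rintro rfl
    simp only [norm_zero, zero_sub, abs_neg, abs_norm] at hya
    linarith
  set a := ‖x‖
  set b := ‖y‖
  set x₁ := a⁻¹ • x
  set y₁ := b⁻¹ • y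
  have hx : x = a • x₁ := (smul_inv_smul₀ ha.ne' x).symm
  have hy : y = b • y₁ := (smul_inv_smul₀ (norm_ne_zero_iff.2 hy0) y).symm
  have hdiff : ‖(a - b) • y₁‖ = |b - a| := by
    rw [norm_smul, norm_inv_norm_smul hy0, Real.norm_eq_abs, abs_sub_comm, mul_one]
  have hclose : ‖x₁ - y₁‖ < ε / (2 * a) := by
    by_contra! hfar
    have hsum := hLUR y₁ (norm_inv_norm_smul hy0) hfar
    have hxy' : ‖x + y‖ ≤ a * ‖x₁ + y₁‖ + |b - a| :=
      calc ‖x + y‖ = ‖a • (x₁ + y₁) - (a - b) • y₁‖ := by rw [hx, hy]; congr 1; module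
        _ ≤ ‖a • (x₁ + y₁)‖ + ‖(a - b) • y₁‖ := norm_sub_le _ _
        _ = a * ‖x₁ + y₁‖ + |b - a| := by rw [norm_smul, Real.norm_of_nonneg ha.le, hdiff]
    have : a * ‖x₁ + y₁‖ ≤ a * (2 - 2 * δ) := by gcongr; linarith
    linarith [neg_abs_le (b - a), abs_lt.1 hya]
  calc ‖x - y‖ = ‖a • (x₁ - y₁) + (a - b) • y₁‖ := by rw [hx, hy]; congr 1; module
    _ ≤ ‖a • (x₁ - y₁)‖ + ‖(a - b) • y₁‖ := norm_add_le _ _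
    _ = a * ‖x₁ - y₁‖ + |b - a| := by rw [norm_smul, Real.norm_of_nonneg ha.le, hdiff]
    _ < a * (ε / (2 * a)) + η := by gcongr
    _ ≤ ε := by rw [mul_div_assoc', mul_comm 2 a, mul_div_mul_left _ _ ha.ne']; linarith

theorem exists_pos_le_Kp_of_le_norm_sub (hX : IsLocallyUniformlyConvex X) (hp : 1 < p) (x : X)
    {r : ℝ} (hr : 0 < r) : ∃ κ > 0, ∀ y : X, r ≤ ‖y - x‖ → κ ≤ Kp p x y := by
  obtain ⟨η, hη, hηx⟩ := hX.exists_norm_sub_lt x hr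
  obtain ⟨ι, hι, hιψ⟩ := exists_pos_le_two_rpow_mul_sub_rpow_add hp (norm_nonneg x) hη
  refine ⟨min ι (η ^ p), by positivity, fun y hy => not_lt.1 fun hK => ?_⟩
  have hKψ := sub_rpow_norm_add_norm_le_Kp (p := p) (by linarith) x y
  have hnorm : |‖y‖ - ‖x‖| < η := not_le.1 fun h => by
    linarith [hιψ _ (norm_nonneg y) h, min_le_left ι (η ^ p)]
  -- if the triangle inequality were far from equality, the `p`-th powers would lose `η ^ p`
  have hadd : ‖x‖ + ‖y‖ - η < ‖x + y‖ := not_le.1 fun h => by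
    have h₀ : 0 ≤ ‖x‖ + ‖y‖ - η := (norm_nonneg _).trans h
    have h₁ : ‖x + y‖ ^ p ≤ (‖x‖ + ‖y‖ - η) ^ p := by gcongr
    have h₂ := Real.add_rpow_le_rpow_add h₀ hη.le hp.le
    rw [sub_add_cancel] at h₂
    have h₃ := rpow_add_le_two_rpow_mul hp.le (norm_nonneg x) (norm_nonneg y)
    have hKxy : Kp p x y = 2 ^ (p - 1) * ‖x‖ ^ p + 2 ^ (p - 1) * ‖y‖ ^ p - ‖x + y‖ ^ p := rfl
    linarith [min_le_right ι (η ^ p)]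
  exact (hηx y hnorm hadd).not_ge (norm_sub_rev x y ▸ hy)

theorem exists_pos_le_Kp_of_le_norm_sub_of_near (hX : IsLocallyUniformlyConvex X) (hp : 1 < p)
    (x : X) {r : ℝ} (hr : 0 < r) :
    ∃ κ > 0, ∃ ρ > 0, ∀ w y : X, ‖w - x‖ ≤ ρ → r ≤ ‖y - w‖ → κ ≤ Kp p w y := by
  obtain ⟨κ, hκ, hKx⟩ := exists_pos_le_Kp_of_le_norm_sub hX hp x (half_pos hr)
  obtain ⟨R, hR⟩ := exists_one_le_Kp (X := X) hp (‖x‖ + 1)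
  set L := (2 ^ (p - 1) + 1) * (p * (2 * (|R| + ‖x‖ + 1)) ^ (p - 1))
  have hL : 0 ≤ L := by positivity
  refine ⟨min 1 (κ / 2), by positivity, min (min 1 (r / 2)) (κ / (2 * L + 1)), by positivity,
    fun w y hw hy => ?_⟩
  have hw₁ : ‖w - x‖ ≤ 1 := hw.trans ((min_le_left _ _).trans (min_le_left _ _))
  have hwr : ‖w - x‖ ≤ r / 2 := hw.trans ((min_le_left _ _).trans (min_le_right _ _))
  have hwκ : ‖w - x‖ ≤ κ / (2 * L + 1) := hw.trans (min_le_right _ _)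
  have hwn : ‖w‖ ≤ ‖x‖ + 1 := by linarith [norm_le_norm_add_norm_sub' w x]
  rcases le_or_gt R ‖y‖ with hRy | hyR
  · exact (min_le_left _ _).trans (hR w y hwn hRy)
  · have hyx : r / 2 ≤ ‖y - x‖ := by
      linarith [norm_sub_le_norm_sub_add_norm_sub y x w, norm_sub_rev x w]
    have hlip := abs_Kp_sub_Kp_le hp (x := x) (x' := w) (y := y) (R := |R| + ‖x‖ + 1)
      (by linarith [abs_nonneg R]) (by linarith [abs_nonneg R])
      (by linarith [le_abs_self R, norm_nonneg x])
    have hLκ : L * ‖w - x‖ ≤ κ / 2 := by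
      calc L * ‖w - x‖ ≤ L * (κ / (2 * L + 1)) := by gcongr
        _ ≤ κ / 2 := by
          rw [mul_div_assoc', div_le_div_iff₀ (by positivity) two_pos]; nlinarith
    linarith [(abs_le.1 hlip).1, hKx y hyx, min_le_right 1 (κ / 2)]

theorem exists_pos_le_Kp_add_Kp (hX : IsLocallyUniformlyConvex X) (hp : 1 < p) (x : X) {r : ℝ}
    (hr : 0 < r) : ∃ κ > 0, ∃ ρ > 0, ∀ w z y : X, ‖w - x‖ ≤ ρ → r ≤ ‖y - w‖ →
      κ ≤ Kp p w z + Kp p z y := by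
  obtain ⟨κ₁, hκ₁, ρ₁, hρ₁, hK₁⟩ := exists_pos_le_Kp_of_le_norm_sub_of_near hX hp x (half_pos hr)
  set t := min (ρ₁ / 2) (r / 2)
  obtain ⟨κ₂, hκ₂, ρ₂, hρ₂, hK₂⟩ :=
    exists_pos_le_Kp_of_le_norm_sub_of_near hX hp x (by positivity : 0 < t)
  refine ⟨min κ₁ κ₂, by positivity, min ρ₂ (ρ₁ / 2), by positivity, fun w z y hw hy => ?_⟩
  have hw₁ : ‖w - x‖ ≤ ρ₁ / 2 := hw.trans (min_le_right _ _)
  have hKwz := Kp_nonneg hp.le w z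
  have hKzy := Kp_nonneg hp.le z y
  rcases le_or_gt t ‖z - w‖ with hzw | hzw
  · linarith [hK₂ w z (hw.trans (min_le_left _ _)) hzw, min_le_right κ₁ κ₂]
  · have hzx : ‖z - x‖ ≤ ρ₁ := by
      linarith [norm_sub_le_norm_sub_add_norm_sub z w x, min_le_left (ρ₁ / 2) (r / 2)]
    have hyz : r / 2 ≤ ‖y - z‖ := by
      linarith [norm_sub_le_norm_sub_add_norm_sub y z w, norm_sub_rev z w,
        min_le_right (ρ₁ / 2) (r / 2)]
    linarith [hK₁ z y hzx hyz, min_le_left κ₁ κ₂]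

end LocallyUniformlyConvex

section Tangent

variable {X : Type*} [NormedAddCommGroup X] [NormedSpace ℝ X] {p : ℝ}

lemma rpow_norm_add_mul_le (hp : 1 < p) {w : X} {φ : StrongDual ℝ X} (hφ : ‖φ‖ ≤ 1)
    (hφw : φ w = ‖w‖) (z : X) : ‖w‖ ^ p + p * ‖w‖ ^ (p - 1) * φ (z - w) ≤ ‖z‖ ^ p := by
  have hφz : φ (z - w) ≤ ‖z‖ - ‖w‖ := by
    rw [map_sub, hφw]
    linarith [(le_abs_self _).trans (φ.le_of_opNorm_le hφ z), one_mul ‖z‖]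
  calc ‖w‖ ^ p + p * ‖w‖ ^ (p - 1) * φ (z - w)
      ≤ ‖w‖ ^ p + p * ‖w‖ ^ (p - 1) * (‖z‖ - ‖w‖) := by gcongr
    _ ≤ ‖z‖ ^ p := rpow_add_mul_sub_le_rpow hp (norm_nonneg w) (norm_nonneg z)

/-- The tangent inequality at the midpoint of `w` and `z`. -/
lemma Kp_le_of_norming (hp : 1 < p) {w : X} {φ : StrongDual ℝ X} (hφ : ‖φ‖ ≤ 1)
    (hφw : φ w = ‖w‖) (z : X) :
    Kp p w z ≤ 2 ^ (p - 1) * (‖z‖ ^ p - ‖w‖ ^ p - p * ‖w‖ ^ (p - 1) * φ (z - w)) := by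
  have hmid := rpow_norm_add_mul_le hp hφ hφw ((2 : ℝ)⁻¹ • (w + z))
  have hsub : (2 : ℝ)⁻¹ • (w + z) - w = (2 : ℝ)⁻¹ • (z - w) := by module
  rw [hsub, map_smul, smul_eq_mul, norm_smul, Real.norm_of_nonneg (by norm_num),
    Real.mul_rpow (by norm_num) (norm_nonneg _), Real.inv_rpow zero_le_two,
    ← two_mul_two_rpow_sub_one] at hmid
  have hsum : 2 * 2 ^ (p - 1) * ‖w‖ ^ p + 2 ^ (p - 1) * (p * ‖w‖ ^ (p - 1) * φ (z - w))
      ≤ ‖w + z‖ ^ p := by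
    have := mul_le_mul_of_nonneg_left hmid (by positivity : (0 : ℝ) ≤ 2 * 2 ^ (p - 1))
    field_simp at this
    linarith
  unfold Kp
  linarith

end Tangent

section ConvexEnvelope

variable {X : Type*} [NormedAddCommGroup X] [NormedSpace ℝ X] {h : X → ℝ}
  {ℓ : StrongDual ℝ X} {b : ℝ} {x : X}

lemma le_sum_mul_of_forall_add_le (hℓ : ∀ z, b + ℓ (z - x) ≤ h z) {m : ℕ} {l : Fin m → ℝ}
    {z : Fin m → X} (hl : ∀ i, 0 ≤ l i) (hl₁ : ∑ i, l i = 1) (hlx : ∑ i, l i • z i = x) :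
    b ≤ ∑ i, l i * h (z i) := by
  have hℓl : ∑ i, l i * ℓ (z i - x) = 0 := by
    simp_rw [← smul_eq_mul, ← map_smul, ← map_sum, smul_sub, Finset.sum_sub_distrib,
      ← Finset.sum_smul, hl₁, one_smul, hlx, sub_self, map_zero]
  calc b = ∑ i, l i * (b + ℓ (z i - x)) := by
        simp_rw [mul_add, Finset.sum_add_distrib, hℓl, ← Finset.sum_mul, hl₁]; ring
    _ ≤ ∑ i, l i * h (z i) := Finset.sum_le_sum fun i _ => by gcongr; exacts [hl i, hℓ _]

lemma le_convEnv (hℓ : ∀ z, b + ℓ (z - x) ≤ h z) : b ≤ convEnv h x :=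
  le_csInf ⟨h x, 1, fun _ => 1, fun _ => x, by simp⟩ fun _ ⟨_, _, _, hl, hl₁, hlx, hr⟩ =>
    hr ▸ le_sum_mul_of_forall_add_le hℓ (fun i => (hl i).le) hl₁ hlx

lemma convEnv_le (hb : ∀ z, b ≤ h z) : convEnv h x ≤ h x :=
  csInf_le ⟨b, fun _ ⟨_, _, _, hl, hl₁, hlx, hr⟩ => hr ▸ le_sum_mul_of_forall_add_le (ℓ := 0)
    (by simpa using hb) (fun i => (hl i).le) hl₁ hlx⟩ ⟨1, fun _ => 1, fun _ => x, by simp⟩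

end ConvexEnvelope

lemma coe_le_add_coe {e : EReal} {a a' t : ℝ} (he : (a : EReal) ≤ e) (h : a' ≤ a + t) :
    (a' : EReal) ≤ e + t :=
  calc (a' : EReal) ≤ ((a + t : ℝ) : EReal) := EReal.coe_le_coe_iff.2 h
    _ = a + t := EReal.coe_add a t
    _ ≤ e + t := add_le_add he le_rfl

section Delta

variable {X : Type*} [NormedAddCommGroup X] {p : ℝ} {f : X → EReal} {m : ℝ}

lemma le_gnp (hfin : ∃ y, f y ≠ ⊤) {n : ℕ} {z : X} {a : ℝ}
    (ha : ∀ y, (a : EReal) ≤ f y + ((n * Kp p z y : ℝ) : EReal)) :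
    a + 2 ^ (p - 1) * n * ‖z‖ ^ p ≤ gnp p f n z := by
  obtain ⟨y₀, hy₀⟩ := hfin
  have hinf : (⨅ y, f y + ((n * Kp p z y : ℝ) : EReal)) ≠ ⊤ :=
    ne_top_of_le_ne_top (EReal.add_lt_top hy₀ (EReal.coe_ne_top _)).ne (iInf_le _ y₀)
  have := EReal.toReal_le_toReal (le_iInf ha) (EReal.coe_ne_bot a) hinf
  rw [EReal.toReal_coe] at this
  unfold gnp; linarith

lemma coe_le_add_Kp (hp : 1 ≤ p) (hm : ∀ y, (m : EReal) ≤ f y) (n : ℕ) (z y : X) :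
    (m : EReal) ≤ f y + ((n * Kp p z y : ℝ) : EReal) :=
  coe_le_add_coe (hm y) (le_add_of_nonneg_right (mul_nonneg n.cast_nonneg (Kp_nonneg hp z y)))

variable [NormedSpace ℝ X]

lemma gnp_le (hp : 1 ≤ p) (hm : ∀ y, (m : EReal) ≤ f y) (n : ℕ) {w : X} (hw : f w ≠ ⊤) :
    gnp p f n w ≤ (f w).toReal + 2 ^ (p - 1) * n * ‖w‖ ^ p := by
  have hbot : (⨅ y, f y + ((n * Kp p w y : ℝ) : EReal)) ≠ ⊥ :=
    ne_bot_of_le_ne_bot (EReal.coe_ne_bot m) (le_iInf (coe_le_add_Kp hp hm n w))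
  have hle : (⨅ y, f y + ((n * Kp p w y : ℝ) : EReal)) ≤ f w := by
    simpa [Kp_self] using iInf_le (fun y => f y + ((n * Kp p w y : ℝ) : EReal)) w
  have := EReal.toReal_le_toReal hle hbot hw
  unfold gnp; linarith

lemma Delta_le_toReal (hp : 1 ≤ p) (hm : ∀ y, (m : EReal) ≤ f y) (n : ℕ) {w : X}
    (hw : f w ≠ ⊤) : Delta p f n w ≤ (f w).toReal := by
  have hgnp : ∀ z, m ≤ gnp p f n z := fun z => by
    have := le_gnp ⟨w, hw⟩ (coe_le_add_Kp hp hm n z)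
    have : 0 ≤ 2 ^ (p - 1) * (n : ℝ) * ‖z‖ ^ p := by positivity
    linarith
  unfold Delta
  linarith [convEnv_le (x := w) hgnp, gnp_le hp hm n hw]

lemma coe_Delta_le (hp : 1 ≤ p) (hm : ∀ y, (m : EReal) ≤ f y) (n : ℕ) (w : X) :
    (Delta p f n w : EReal) ≤ f w := by
  by_cases hw : f w = ⊤
  · simp [hw]
  · rw [← EReal.coe_toReal hw (ne_bot_of_le_ne_bot (EReal.coe_ne_bot m) (hm w))]
    exact EReal.coe_le_coe_iff.2 (Delta_le_toReal hp hm n hw)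

theorem le_Delta (hp : 1 < p) (hfin : ∃ y, f y ≠ ⊤) (hm : ∀ y, (m : EReal) ≤ f y) {w : X}
    {M r κ : ℝ} (hM : ∀ y, ‖y - w‖ ≤ r → (M : EReal) ≤ f y)
    (hK : ∀ z y, r < ‖y - w‖ → κ ≤ Kp p w z + Kp p z y) {n : ℕ} (hn : M - m ≤ n * κ) :
    M ≤ Delta p f n w := by
  obtain ⟨φ, hφ, hφw⟩ := exists_dual_vector'' ℝ w
  set c : ℝ := 2 ^ (p - 1)
  set B : X → ℝ := fun z => ‖z‖ ^ p - ‖w‖ ^ p - p * ‖w‖ ^ (p - 1) * φ (z - w)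
  have hgnp : ∀ z, (M + c * n * ‖w‖ ^ p) + ((c * n * p * ‖w‖ ^ (p - 1)) • φ) (z - w)
      ≤ gnp p f n z := by
    intro z
    have hB : 0 ≤ c * n * B z :=
      mul_nonneg (by positivity) (by linarith [rpow_norm_add_mul_le hp hφ hφw z])
    have hKwz : n * Kp p w z ≤ c * n * B z := by
      nlinarith [Kp_le_of_norming hp hφ hφw z, (n.cast_nonneg : (0 : ℝ) ≤ n)]
    have := le_gnp hfin (p := p) (n := n) (z := z) (a := M - c * n * B z) fun y => by
      have hKzy : 0 ≤ n * Kp p z y := mul_nonneg n.cast_nonneg (Kp_nonneg hp.le z y)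
      rcases le_or_gt ‖y - w‖ r with hy | hy
      · exact coe_le_add_coe (hM y hy) (by linarith)
      · have := mul_le_mul_of_nonneg_left (hK z y hy) (n.cast_nonneg : (0 : ℝ) ≤ n)
        exact coe_le_add_coe (hm y) (by linarith)
    simp only [B, FunLike.coe_smul, Pi.smul_apply, smul_eq_mul] at this ⊢
    linarith
  have := le_convEnv hgnp
  unfold Delta; linarith

end Delta

section Convergence

variable {X : Type*} [NormedAddCommGroup X] [NormedSpace ℝ X] {p : ℝ} {f : X → EReal} {m : ℝ}

theorem exists_eventually_le_Delta (hX : IsLocallyUniformlyConvex X) (hp : 1 < p)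
    (hfin : ∃ y, f y ≠ ⊤) (hm : ∀ y, (m : EReal) ≤ f y) (x : X) {M r : ℝ} (hr : 0 < r)
    (hM : ∀ y, ‖y - x‖ < r → (M : EReal) ≤ f y) :
    ∃ ρ > 0, ∀ᶠ n : ℕ in atTop, ∀ w, ‖w - x‖ ≤ ρ → M ≤ Delta p f n w := by
  obtain ⟨κ, hκ, ρ, hρ, hK⟩ := exists_pos_le_Kp_add_Kp hX hp x (half_pos hr)
  refine ⟨min ρ (r / 4), by positivity, ?_⟩
  filter_upwards [tendsto_natCast_atTop_atTop.eventually_ge_atTop ((M - m) / κ)] with n hn w hw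
  have hwρ : ‖w - x‖ ≤ ρ := hw.trans (min_le_left _ _)
  have hwr : ‖w - x‖ ≤ r / 4 := hw.trans (min_le_right _ _)
  refine le_Delta hp hfin hm (r := r / 2) (fun y hy => hM y ?_)
    (fun z y hy => hK w z y hwρ hy.le) ((div_le_iff₀ hκ).1 hn)
  linarith [norm_sub_le_norm_sub_add_norm_sub y w x]

theorem tendsto_Delta (hX : IsLocallyUniformlyConvex X) (hp : 1 < p) (hfin : ∃ y, f y ≠ ⊤)
    (hm : ∀ y, (m : EReal) ≤ f y) (hf : LowerSemicontinuous f) (x : X) :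
    Tendsto (fun n : ℕ => (Delta p f n x : EReal)) atTop (𝓝 (f x)) := by
  refine tendsto_order.2 ⟨fun a ha => ?_, fun a ha =>
    Eventually.of_forall fun n => (coe_Delta_le hp.le hm n x).trans_lt ha⟩
  obtain ⟨M, haM, hMf⟩ := EReal.lt_iff_exists_real_btwn.1 ha
  obtain ⟨r, hr, hball⟩ := Metric.eventually_nhds_iff.1 (hf x M hMf)
  obtain ⟨ρ, hρ, hev⟩ := exists_eventually_le_Delta hX hp hfin hm x hr
    fun y hy => (hball (by rwa [dist_eq_norm])).le
  filter_upwards [hev] with n hn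
  exact haM.trans_le (EReal.coe_le_coe_iff.2 (hn x (by simpa using hρ.le)))

theorem tendstoLocallyUniformly_Delta (hX : IsLocallyUniformlyConvex X) (hp : 1 < p)
    (hm : ∀ y, (m : EReal) ≤ f y) {g : X → ℝ} (hg : Continuous g) (hfg : ∀ x, f x = g x) :
    TendstoLocallyUniformly (fun n x => Delta p f n x) g atTop := by
  refine Metric.tendstoLocallyUniformly_iff.2 fun ε hε x => ?_
  obtain ⟨r, hr, hgx⟩ := Metric.continuousAt_iff.1 hg.continuousAt (ε / 2) (half_pos hε)
  obtain ⟨ρ, hρ, hev⟩ := exists_eventually_le_Delta hX hp ⟨x, by simp [hfg]⟩ hm x hr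
    (M := g x - ε / 2) fun y hy => by
      rw [hfg, EReal.coe_le_coe_iff]
      linarith [(abs_lt.1 (hgx (by rwa [dist_eq_norm]))).1]
  refine ⟨ball x (min ρ r), ball_mem_nhds x (lt_min hρ hr), ?_⟩
  filter_upwards [hev] with n hn y hy
  rw [mem_ball, dist_eq_norm] at hy
  have hup := Delta_le_toReal hp.le hm n (w := y) (by simp [hfg])
  rw [hfg, EReal.toReal_coe] at hup
  have hgy := hgx (show dist y x < r by rw [dist_eq_norm]; exact hy.trans_le (min_le_right _ _))
  rw [Real.dist_eq] at hgy ⊢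
  rw [abs_lt] at hgy ⊢
  constructor
  · linarith
  · linarith [hn y (hy.le.trans (min_le_left _ _))]

end Convergence

theorem stmt_2_general {X : Type*} [NormedAddCommGroup X] [NormedSpace ℝ X]
    (hLUR : ∀ x : X, ‖x‖ = 1 → ∀ ε : ℝ, 0 < ε → ∃ δ : ℝ, 0 < δ ∧
      ∀ y : X, ‖y‖ = 1 → ε ≤ ‖x - y‖ → ‖x + y‖ / 2 ≤ 1 - δ)
    (p : ℝ) (hp : 1 < p)
    (f : X → EReal)
    (hproper : ∃ x, f x ≠ ⊤)
    (hlsc : LowerSemicontinuous f)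
    (hbdd : ∃ m : ℝ, ∀ x, (m : EReal) ≤ f x) :
    (∀ x : X, Filter.Tendsto (fun n : ℕ => (Delta p f n x : EReal))
      Filter.atTop (nhds (f x))) ∧
    (∀ g : X → ℝ, Continuous g → (∀ x, f x = (g x : EReal)) →
      ∀ s : Set X, IsCompact s →
        TendstoUniformlyOn (fun (n : ℕ) (x : X) => Delta p f n x) g Filter.atTop s) := by
  obtain ⟨m, hm⟩ := hbdd
  exact ⟨tendsto_Delta hLUR hp hproper hm hlsc, fun g hg hfg s hs =>
    (tendstoLocallyUniformlyOn_iff_tendstoUniformlyOn_of_compact hs).1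
      (tendstoLocallyUniformly_Delta hLUR hp hm hg hfg).tendstoLocallyUniformlyOn⟩

/-- For a Banach space whose norm is locally uniformly convex and uniformly smooth,
`p > 1` and `f` proper, lower semicontinuous and bounded below: `Δ_n^p f → f` pointwise
(in `ℝ ∪ {+∞}`), and uniformly on compact sets when `f` is real-valued and continuous. -/
theorem stmt_2 {X : Type*} [NormedAddCommGroup X] [NormedSpace ℝ X] [CompleteSpace X]
    (hLUR : ∀ x : X, ‖x‖ = 1 → ∀ ε : ℝ, 0 < ε → ∃ δ : ℝ, 0 < δ ∧
      ∀ y : X, ‖y‖ = 1 → ε ≤ ‖x - y‖ → ‖x + y‖ / 2 ≤ 1 - δ)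
    (hUS : Filter.Tendsto
      (fun τ : ℝ => (sSup {r : ℝ | ∃ x y : X, ‖x‖ = 1 ∧ ‖y‖ = 1 ∧
        r = (‖x + τ • y‖ + ‖x - τ • y‖) / 2 - 1}) / τ)
      (nhdsWithin 0 (Set.Ioi (0 : ℝ))) (nhds 0))
    (p : ℝ) (hp : 1 < p)
    (f : X → EReal)
    (hproper : ∃ x, f x ≠ ⊤)
    (hlsc : LowerSemicontinuous f)
    (hbdd : ∃ m : ℝ, ∀ x, (m : EReal) ≤ f x) :
    (∀ x : X, Filter.Tendsto (fun n : ℕ => (Delta p f n x : EReal))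
      Filter.atTop (nhds (f x))) ∧
    (∀ g : X → ℝ, Continuous g → (∀ x, f x = (g x : EReal)) →
      ∀ s : Set X, IsCompact s →
        TendstoUniformlyOn (fun (n : ℕ) (x : X) => Delta p f n x) g Filter.atTop s) :=
  stmt_2_general hLUR p hp f hproper hlsc hbdd
end

section
/- Let X be a real Banach space, let K : X×X → ℝ be a kernel satisfying conditions (1)–(4) which is moreover uniformly separating on bounded sets, and let f : X → ℝ be bounded below and uniformly continuous on every bounded subset of X. Then I_{K,n}(I_{K,n} f) → f uniformly on every bounded subset of X as n → ∞. -/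
open scoped BigOperators

/-- The inf-convolution `I_{K,n} f (x) = inf_y ( f(y) + n K(x,y) )` for real-valued `f`. -/
noncomputable def infConvKR {X : Type*} [NormedAddCommGroup X]
    (K : X → X → ℝ) (f : X → ℝ) (n : ℕ) (x : X) : ℝ :=
  ⨅ y, f y + (n : ℝ) * K x y

/-!
Since `K x x = 0`, `I_{K,n} g ≤ g`, which gives `I_{K,n}(I_{K,n} f) ≤ I_{K,n} f ≤ f`.
For the lower bound, `I_{K,n} g ≥ f - ε - η` on a ball, eventually in `n` and uniformly in
every `g ≥ m` that is `η`-close to `f` from below on a slightly larger ball. Applying this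
with `m ≤ f`, first to `g = f` and then to `g = I_{K,n} f ≥ m`, gives the result.
-/

open Filter Metric

theorem le_add_of_dist_succ_lt {α : Type*} [PseudoMetricSpace α] {s : Set α} {f : α → ℝ}
    {δ : ℝ} (hf : ∀ x ∈ s, ∀ y ∈ s, dist x y < δ → dist (f x) (f y) < 1)
    (u : ℕ → α) (n : ℕ) (hu : ∀ k ≤ n, u k ∈ s)
    (hstep : ∀ k < n, dist (u (k + 1)) (u k) < δ) : f (u n) ≤ f (u 0) + n := by
  induction n with
  | zero => simp
  | succ n ih =>
    have hprev := ih (fun k hk => hu k (by omega)) (fun k hk => hstep k (by omega))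
    have hjump := hf _ (hu _ le_rfl) _ (hu n (by omega)) (hstep n (by omega))
    rw [Real.dist_eq, abs_lt] at hjump
    push_cast
    linarith

/-- Chaining along the segment from `0` to `x` in steps shorter than the modulus of
continuity for `1` bounds `f x` by `f 0 + N`. -/
theorem UniformContinuousOn.exists_forall_closedBall_le {X : Type*} [NormedAddCommGroup X]
    [NormedSpace ℝ X] {f : X → ℝ} {r : ℝ} (hf : UniformContinuousOn f (closedBall 0 r)) :
    ∃ F, ∀ x, ‖x‖ ≤ r → f x ≤ F := by
  obtain ⟨δ, hδ, hfδ⟩ := Metric.uniformContinuousOn_iff.mp hf 1 one_pos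
  obtain ⟨N, hN⟩ := exists_nat_gt (r / δ)
  refine ⟨f 0 + N, fun x hx => ?_⟩
  have hN0 : (0 : ℝ) < N := lt_of_le_of_lt (div_nonneg ((norm_nonneg x).trans hx) hδ.le) hN
  have hchain := le_add_of_dist_succ_lt hfδ (fun k : ℕ => ((k : ℝ) / N) • x) N
    (fun k hk => by
      rw [mem_closedBall, dist_zero_right, norm_smul, Real.norm_of_nonneg (by positivity)]
      have : (k : ℝ) / N ≤ 1 := (div_le_one hN0).mpr (by exact_mod_cast hk)
      nlinarith [norm_nonneg x])
    (fun k _ => by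
      rw [dist_eq_norm, ← sub_smul, norm_smul, Nat.cast_succ, ← sub_div, add_sub_cancel_left,
        Real.norm_of_nonneg (by positivity), one_div_mul_eq_div, div_lt_iff₀ hN0]
      rw [div_lt_iff₀ hδ] at hN
      linarith)
  simpa [div_self hN0.ne'] using hchain

theorem bddBelow_range_add_mul {X : Type*} {K : X → X → ℝ} (hK0 : ∀ x y, 0 ≤ K x y)
    {g : X → ℝ} {m : ℝ} (hg : ∀ y, m ≤ g y) (n : ℕ) (x : X) :
    BddBelow (Set.range fun y => g y + (n : ℝ) * K x y) := by
  refine ⟨m, ?_⟩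
  rintro _ ⟨y, rfl⟩
  linarith [hg y, mul_nonneg n.cast_nonneg (hK0 x y)]

section InfConv

variable {X : Type*} [NormedAddCommGroup X] {K : X → X → ℝ}

theorem le_infConvKR (hK0 : ∀ x y, 0 ≤ K x y) {g : X → ℝ} {m : ℝ} (hg : ∀ y, m ≤ g y)
    (n : ℕ) (x : X) : m ≤ infConvKR K g n x :=
  le_ciInf fun y => by linarith [hg y, mul_nonneg n.cast_nonneg (hK0 x y)]

theorem infConvKR_le_self (hK0 : ∀ x y, 0 ≤ K x y) (hKdiag : ∀ x, K x x = 0) {g : X → ℝ}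
    {m : ℝ} (hg : ∀ y, m ≤ g y) (n : ℕ) (x : X) : infConvKR K g n x ≤ g x := by
  simpa [infConvKR, hKdiag x] using ciInf_le (bddBelow_range_add_mul hK0 hg n x) x

/-- Near `x` the infimand is controlled by the continuity of `f` and `g ≥ f - η`; away from
`x` the separation of `K` makes `n K x y` eventually exceed the oscillation `sup f - m`. -/
theorem eventually_sub_le_infConvKR [NormedSpace ℝ X] (hK0 : ∀ x y, 0 ≤ K x y)
    (hKsep : ∀ r δ : ℝ, 0 < r → 0 < δ → ∃ C : ℝ, 0 < C ∧
      ∀ x y : X, ‖x‖ ≤ r → δ ≤ ‖x - y‖ → C ≤ K x y)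
    {f : X → ℝ} {ρ : ℝ} (hρ : 0 < ρ) (hf : UniformContinuousOn f (closedBall 0 (ρ + 1)))
    (m : ℝ) {ε : ℝ} (hε : 0 < ε) :
    ∀ᶠ n in atTop, ∀ (g : X → ℝ) (η : ℝ), 0 ≤ η → (∀ y, m ≤ g y) →
      (∀ y, ‖y‖ ≤ ρ + 1 → f y - η ≤ g y) →
      ∀ x, ‖x‖ ≤ ρ → f x - (ε + η) ≤ infConvKR K g n x := by
  obtain ⟨F, hF⟩ := hf.exists_forall_closedBall_le
  obtain ⟨δ, hδ, hfδ⟩ := Metric.uniformContinuousOn_iff.mp hf ε hε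
  obtain ⟨C, hC, hCsep⟩ := hKsep ρ (min δ 1) hρ (lt_min hδ one_pos)
  obtain ⟨N, hN⟩ := exists_nat_gt ((F - m) / C)
  rw [div_lt_iff₀ hC] at hN
  filter_upwards [eventually_ge_atTop N] with n hn g η hη hg hfg x hx
  refine le_ciInf fun y => ?_
  have hKxy : 0 ≤ (n : ℝ) * K x y := mul_nonneg n.cast_nonneg (hK0 x y)
  by_cases hnear : ‖x - y‖ < min δ 1
  · have hy : ‖y‖ ≤ ρ + 1 := by
      have := norm_le_norm_add_norm_sub' y x
      rw [norm_sub_rev] at this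
      linarith [hnear.trans_le (min_le_right δ 1)]
    have hfxy := hfδ x (by simpa using hx.trans (by linarith)) y (by simpa using hy)
      (by rw [dist_eq_norm]; exact hnear.trans_le (min_le_left δ 1))
    rw [Real.dist_eq, abs_lt] at hfxy
    linarith [hfg y hy]
  · have hfar : (N : ℝ) * C ≤ n * K x y :=
      mul_le_mul (by exact_mod_cast hn) (hCsep x y hx (not_lt.mp hnear)) hC.le n.cast_nonneg
    linarith [hg y, hF x (by linarith)]

end InfConv

theorem stmt_9_general {X : Type*} [NormedAddCommGroup X] [NormedSpace ℝ X]
    (K : X → X → ℝ)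
    (hK1 : (∀ x y : X, 0 ≤ K x y) ∧ ∀ x : X, K x x = 0)
    (hKsep : ∀ r δ : ℝ, 0 < r → 0 < δ → ∃ C : ℝ, 0 < C ∧
      ∀ x y : X, ‖x‖ ≤ r → δ ≤ ‖x - y‖ → C ≤ K x y)
    (f : X → ℝ)
    (hbdd : ∃ m : ℝ, ∀ x, m ≤ f x)
    (hucb : ∀ s : Set X, Bornology.IsBounded s → UniformContinuousOn f s) :
    ∀ s : Set X, Bornology.IsBounded s →
      TendstoUniformlyOn
        (fun (n : ℕ) (x : X) => infConvKR K (fun y => infConvKR K f n y) n x)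
        f Filter.atTop s := by
  obtain ⟨hK0, hKdiag⟩ := hK1
  obtain ⟨m, hm⟩ := hbdd
  have huc : ∀ r, UniformContinuousOn f (closedBall 0 r) := fun r => hucb _ isBounded_closedBall
  intro s hs
  obtain ⟨ρ, hρ, hsρ⟩ := hs.subset_closedBall_lt 0 0
  rw [Metric.tendstoUniformlyOn_iff]
  intro ε hε
  have hε3 : 0 < ε / 3 := by positivity
  filter_upwards [eventually_sub_le_infConvKR hK0 hKsep (ρ := ρ + 1) (by linarith) (huc _) m hε3,
    eventually_sub_le_infConvKR hK0 hKsep hρ (huc _) m hε3] with n hinner houter x hx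
  have hsingle : ∀ y, ‖y‖ ≤ ρ + 1 → f y - ε / 3 ≤ infConvKR K f n y := fun y hy => by
    simpa using hinner f 0 le_rfl hm (fun y _ => by simp) y hy
  have hlower := houter _ (ε / 3) hε3.le (le_infConvKR hK0 hm n) hsingle x
    (by simpa using hsρ hx)
  have hupper := (infConvKR_le_self hK0 hKdiag (le_infConvKR hK0 hm n) n x).trans
    (infConvKR_le_self hK0 hKdiag hm n x)
  rw [Real.dist_eq, abs_sub_lt_iff]
  constructor <;> linarith

/-- Let `K` be a kernel satisfying conditions (1)–(4) which is uniformly separating on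
bounded sets, and let `f : X → ℝ` be bounded below and uniformly continuous on bounded
sets. Then `I_{K,n}(I_{K,n} f) → f` uniformly on every bounded subset of `X`. -/
theorem stmt_9 {X : Type*} [NormedAddCommGroup X] [NormedSpace ℝ X] [CompleteSpace X]
    (K : X → X → ℝ)
    (hK1 : (∀ x y : X, 0 ≤ K x y) ∧ ∀ x : X, K x x = 0)
    (hK2 : ∀ x y : X, K x y = K y x)
    (hK3 : ∀ r M : ℝ, 0 < r → 0 < M → ∃ R : ℝ, ∀ x y : X, ‖x‖ ≤ r → R ≤ ‖y‖ → M ≤ K x y)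
    (hK4 : ∀ s : Set (X × X), Bornology.IsBounded s →
      UniformContinuousOn (fun q : X × X => K q.1 q.2) s)
    (hKsep : ∀ r δ : ℝ, 0 < r → 0 < δ → ∃ C : ℝ, 0 < C ∧
      ∀ x y : X, ‖x‖ ≤ r → δ ≤ ‖x - y‖ → C ≤ K x y)
    (f : X → ℝ)
    (hbdd : ∃ m : ℝ, ∀ x, m ≤ f x)
    (hucb : ∀ s : Set X, Bornology.IsBounded s → UniformContinuousOn f s) :
    ∀ s : Set X, Bornology.IsBounded s →
      TendstoUniformlyOn
        (fun (n : ℕ) (x : X) => infConvKR K (fun y => infConvKR K f n y) n x)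
        f Filter.atTop s :=
  stmt_9_general K hK1 hKsep f hbdd hucb
end
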